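/- Let A ⊆ ℝ^D be convex and M strongly monotone with constant ν > 0, and let ε > 0. Suppose (a*, λ*) solves VI(W, A × ℝ^n_+) and (a*_ε, λ*_ε) solves VI(W_ε, A × ℝ^n_+). Then ν‖a* − a*_ε‖² + ε‖λ* − λ*_ε‖² ≤ ε⟨λ*, λ* − λ*_ε⟩; consequently ‖λ* − λ*_ε‖ ≤ ‖λ*‖ and ν‖a* − a*_ε‖² ≤ ε‖λ*‖·‖λ* − λ*_ε‖ ≤ ε‖λ*‖². -/

import Mathlib

open scoped RealInnerProductSpace

/-- Matrix-vector multiplication, viewed as a map between Euclidean spaces. -/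
noncomputable def mulVecE {n D : ℕ} (K : Matrix (Fin n) (Fin D) ℝ)
    (x : EuclideanSpace ℝ (Fin D)) : EuclideanSpace ℝ (Fin n) :=
  (WithLp.equiv 2 _).symm (K.mulVec ((WithLp.equiv 2 _) x))

lemma mulVecE_adj {n D : ℕ} (K : Matrix (Fin n) (Fin D) ℝ) (lam : EuclideanSpace ℝ (Fin n))
    (x : EuclideanSpace ℝ (Fin D)) :
    ⟪mulVecE K.transpose lam, x⟫ = ⟪lam, mulVecE K x⟫ := by
  simp only [mulVecE, PiLp.inner_apply, RCLike.inner_apply, starRingEnd_apply, star_trivial,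
    WithLp.equiv_symm_apply, PiLp.toLp_apply, WithLp.equiv_apply, Matrix.mulVec, dotProduct,
    Matrix.transpose_apply, Finset.sum_mul, Finset.mul_sum]
  rw [Finset.sum_comm]
  congr 1; ext i; congr 1; ext j; ring

/-- comparison between the solution of `VI(W, A × ℝⁿ₊)` and the solution of
the regularized `VI(W_ε, A × ℝⁿ₊)`. -/
theorem stmt_7 (D n : ℕ)
    (A : Set (EuclideanSpace ℝ (Fin D))) (hAconv : Convex ℝ A)
    (K : Matrix (Fin n) (Fin D) ℝ) (l : EuclideanSpace ℝ (Fin n))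
    (M : EuclideanSpace ℝ (Fin D) → EuclideanSpace ℝ (Fin D))
    (ν : ℝ) (hν : 0 < ν)
    (hmono : ∀ a₁ a₂ : EuclideanSpace ℝ (Fin D), ν * ‖a₁ - a₂‖ ^ 2 ≤ ⟪M a₁ - M a₂, a₁ - a₂⟫)
    (ε : ℝ) (hε : 0 < ε)
    (astar aε : EuclideanSpace ℝ (Fin D)) (lstar lε : EuclideanSpace ℝ (Fin n))
    (hastarA : astar ∈ A) (hlstar : ∀ j, 0 ≤ lstar j)
    (haεA : aε ∈ A) (hlε : ∀ j, 0 ≤ lε j)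
    (hVI : ∀ a ∈ A, ∀ lam : EuclideanSpace ℝ (Fin n), (∀ j, 0 ≤ lam j) →
      0 ≤ ⟪M astar + mulVecE K.transpose lstar, a - astar⟫
          + ⟪l - mulVecE K astar, lam - lstar⟫)
    (hVIε : ∀ a ∈ A, ∀ lam : EuclideanSpace ℝ (Fin n), (∀ j, 0 ≤ lam j) →
      0 ≤ ⟪M aε + mulVecE K.transpose lε, a - aε⟫
          + ⟪l - mulVecE K aε + ε • lε, lam - lε⟫) :
    ν * ‖astar - aε‖ ^ 2 + ε * ‖lstar - lε‖ ^ 2 ≤ ε * ⟪lstar, lstar - lε⟫ ∧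
    ‖lstar - lε‖ ≤ ‖lstar‖ ∧
    ν * ‖astar - aε‖ ^ 2 ≤ ε * ‖lstar‖ * ‖lstar - lε‖ ∧
    ε * ‖lstar‖ * ‖lstar - lε‖ ≤ ε * ‖lstar‖ ^ 2 := by
  have h1 := hVI aε haεA lε hlε
  have h2 := hVIε astar hastarA lstar hlstar
  have hm := hmono astar aε
  -- Expand the two VI inequalities and add them; the bilinear cross terms cancel.
  have hcancel :
      ⟪M astar + mulVecE K.transpose lstar, aε - astar⟫
        + ⟪l - mulVecE K astar, lε - lstar⟫
        + (⟪M aε + mulVecE K.transpose lε, astar - aε⟫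
        + ⟪l - mulVecE K aε + ε • lε, lstar - lε⟫)
      = -⟪M astar - M aε, astar - aε⟫ + ε * ⟪lε, lstar - lε⟫ := by
    simp only [inner_add_left, inner_sub_left, inner_sub_right, real_inner_smul_left,
      mulVecE_adj, real_inner_comm (mulVecE K astar), real_inner_comm (mulVecE K aε)]
    ring
  have hkey : ⟪M astar - M aε, astar - aε⟫ ≤ ε * ⟪lε, lstar - lε⟫ := by
    nlinarith [hcancel]
  have hsplit : ε * ⟪lε, lstar - lε⟫ + ε * ⟪lstar - lε, lstar - lε⟫
      = ε * ⟪lstar, lstar - lε⟫ := by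
    rw [← mul_add, ← inner_add_left]
    congr 2
    abel
  have hnorm : ⟪lstar - lε, lstar - lε⟫ = ‖lstar - lε‖ ^ 2 := by
    rw [real_inner_self_eq_norm_sq]
  have hfirst : ν * ‖astar - aε‖ ^ 2 + ε * ‖lstar - lε‖ ^ 2 ≤ ε * ⟪lstar, lstar - lε⟫ := by
    rw [← hsplit, ← hnorm]
    have := hmono astar aε
    nlinarith
  have hcauchy : ⟪lstar, lstar - lε⟫ ≤ ‖lstar‖ * ‖lstar - lε‖ := real_inner_le_norm _ _
  have hnueps : 0 ≤ ν * ‖astar - aε‖ ^ 2 := by positivity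
  have hsecond : ‖lstar - lε‖ ≤ ‖lstar‖ := by
    rcases eq_or_lt_of_le (norm_nonneg (lstar - lε)) with h0 | h0
    · rw [← h0]; exact norm_nonneg _
    · have : ε * ‖lstar - lε‖ ^ 2 ≤ ε * (‖lstar‖ * ‖lstar - lε‖) := by nlinarith
      have h2' : ‖lstar - lε‖ ^ 2 ≤ ‖lstar‖ * ‖lstar - lε‖ := le_of_mul_le_mul_left this hε
      nlinarith
  refine ⟨hfirst, hsecond, ?_, ?_⟩
  · nlinarith [sq_nonneg ‖lstar - lε‖]
  · have := mul_le_mul_of_nonneg_left hsecond (mul_nonneg hε.le (norm_nonneg lstar))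
    nlinarith
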